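/- Let Π : Z × X → ℝ be a joint distribution (nonnegative, summing to 1) with Z-marginal ρ and X-marginal σ, let X̂ : X → Z → ℝ be a channel with σ x * X̂ x z = Π (z,x) for all z,x, and for a nonnegative gain function g : W → Z → ℝ define g^Π : W → X → ℝ by g^Π w x = Σ_z X̂ x z * g w z. Then the prior vulnerabilities agree: V_g(ρ) = V_{g^Π}(σ). Consequently, if additionally Ẑ : Z → X → ℝ is a channel with ρ z * Ẑ z x = Π (z,x), C : X → Y → ℝ is a channel, and V_g(ρ) > 0, then the multiplicative leakages agree: L_g(ρ, Ẑ·C) = L_{g^Π}(σ, C). -/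
import Mathlib


open Finset

/-- Prior g-vulnerability: `V_g(π) = max_w Σ_x π x * g w x`. -/
noncomputable def vul {W X : Type} [Fintype X] [Fintype W] [Nonempty W]
    (g : W → X → ℝ) (π : X → ℝ) : ℝ :=
  Finset.univ.sup' Finset.univ_nonempty (fun w => ∑ x, π x * g w x)

/-- Posterior g-vulnerability: `V_g[π▷C] = Σ_y max_w Σ_x π x * C x y * g w x`. -/
noncomputable def vulPost {W X Y : Type} [Fintype X] [Fintype Y] [Fintype W] [Nonempty W]
    (g : W → X → ℝ) (π : X → ℝ) (C : X → Y → ℝ) : ℝ :=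
  ∑ y, Finset.univ.sup' Finset.univ_nonempty (fun w => ∑ x, π x * C x y * g w x)

/-- Multiplicative g-leakage: `L_g(π,C) = log₂ (V_g[π▷C] / V_g(π))`. -/
noncomputable def leak {W X Y : Type} [Fintype X] [Fintype Y] [Fintype W] [Nonempty W]
    (g : W → X → ℝ) (π : X → ℝ) (C : X → Y → ℝ) : ℝ :=
  Real.logb 2 (vulPost g π C / vul g π)

/-- Channel cascade: `(Ẑ·C) z y = Σ_x Ẑ z x * C x y`. -/
noncomputable def cascade {Z X Y : Type} [Fintype X]
    (Zc : Z → X → ℝ) (C : X → Y → ℝ) : Z → Y → ℝ :=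
  fun z y => ∑ x, Zc z x * C x y

/-- prior vulnerabilities agree, `V_g(ρ) = V_{g^Π}(σ)`; consequently the
multiplicative leakages agree, `L_g(ρ, Ẑ·C) = L_{g^Π}(σ, C)`. -/
theorem vul_marginal_eq_and_leak_eq {Z X W : Type}
    [Fintype Z] [Nonempty Z] [Fintype X] [Nonempty X] [Fintype W] [Nonempty W]
    (Pi : Z × X → ℝ) (hPipos : ∀ p, 0 ≤ Pi p) (hPisum : ∑ p : Z × X, Pi p = 1)
    (ρ : Z → ℝ) (hρ : ∀ z, ρ z = ∑ x, Pi (z, x))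
    (σ : X → ℝ) (hσ : ∀ x, σ x = ∑ z, Pi (z, x))
    (Xhat : X → Z → ℝ) (hXpos : ∀ x z, 0 ≤ Xhat x z) (hXsum : ∀ x, ∑ z, Xhat x z = 1)
    (hXfac : ∀ z x, σ x * Xhat x z = Pi (z, x))
    (g : W → Z → ℝ) (hgpos : ∀ w z, 0 ≤ g w z) :
    vul g ρ = vul (fun w x => ∑ z, Xhat x z * g w z) σ ∧
      (∀ (Y : Type) [Fintype Y] [Nonempty Y] (C : X → Y → ℝ),
        (∀ x y, 0 ≤ C x y) → (∀ x, ∑ y, C x y = 1) →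
        ∀ (Zhat : Z → X → ℝ), (∀ z x, 0 ≤ Zhat z x) → (∀ z, ∑ x, Zhat z x = 1) →
        (∀ z x, ρ z * Zhat z x = Pi (z, x)) →
        0 < vul g ρ →
        leak g ρ (cascade Zhat C) = leak (fun w x => ∑ z, Xhat x z * g w z) σ C) := by
  have key : ∀ w, (∑ x, σ x * ∑ z, Xhat x z * g w z) = ∑ z, ρ z * g w z := by
    intro w
    calc (∑ x, σ x * ∑ z, Xhat x z * g w z)
        = ∑ x, ∑ z, Pi (z, x) * g w z := by
          refine Finset.sum_congr rfl fun x _ => ?_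
          rw [Finset.mul_sum]
          exact Finset.sum_congr rfl fun z _ => by rw [← hXfac z x]; ring
      _ = ∑ z, ρ z * g w z := by
          rw [Finset.sum_comm]
          refine Finset.sum_congr rfl fun z _ => ?_
          rw [hρ, Finset.sum_mul]
  have hvul : vul g ρ = vul (fun w x => ∑ z, Xhat x z * g w z) σ := by
    unfold vul
    exact Finset.sup'_congr _ rfl (fun w _ => (key w).symm)
  refine ⟨hvul, ?_⟩
  intro Y _ _ C hCpos hCsum Zhat hZpos hZsum hZfac hv
  have keyP : ∀ (y : Y) w, (∑ z, ρ z * cascade Zhat C z y * g w z)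
      = ∑ x, σ x * C x y * ∑ z, Xhat x z * g w z := by
    intro y w
    calc (∑ z, ρ z * cascade Zhat C z y * g w z)
        = ∑ z, ∑ x, Pi (z, x) * C x y * g w z := by
          refine Finset.sum_congr rfl fun z _ => ?_
          simp only [cascade, Finset.mul_sum, Finset.sum_mul]
          exact Finset.sum_congr rfl fun x _ => by rw [← hZfac z x]; ring
      _ = ∑ x, σ x * C x y * ∑ z, Xhat x z * g w z := by
          rw [Finset.sum_comm]
          refine Finset.sum_congr rfl fun x _ => ?_
          rw [Finset.mul_sum]
          exact Finset.sum_congr rfl fun z _ => by rw [← hXfac z x]; ring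
  have hpost : vulPost g ρ (cascade Zhat C) = vulPost (fun w x => ∑ z, Xhat x z * g w z) σ C := by
    unfold vulPost
    refine Finset.sum_congr rfl fun y _ => ?_
    exact Finset.sup'_congr _ rfl (fun w _ => keyP y w)
  unfold leak
  rw [hpost, hvul]
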